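/- For every real u with |u| < 1/√β_t, the rescaled function B̂(u) := B(u/√τ, τ) satisfies, as τ → 0+, B̂(u) = u²/2 + B̂₁(u)·√τ + O(τ), where B̂₁(u) := (u/4)(u²ρξ − 2). -/

import Mathlib

open Filter Topology Asymptotics MeasureTheory

set_option linter.unusedVariables false

noncomputable section


/-- sign convention of the paper: 1 if `0 ≤ x`, -1 otherwise. -/
def sgn' (x : ℝ) : ℝ := if 0 ≤ x then 1 else -1

/-- principal-branch complex square root `d` of the Heston Riccati discriminant. -/
def hestD (κ ρ ξ : ℝ) (w : ℂ) : ℂ :=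
  (((κ : ℂ) - (ρ : ℂ) * (ξ : ℂ) * w) ^ 2 + w * (1 - w) * (ξ : ℂ) ^ 2) ^ ((1 : ℂ) / 2)

def hestGamma (κ ρ ξ : ℝ) (w : ℂ) : ℂ :=
  ((κ : ℂ) - (ρ : ℂ) * (ξ : ℂ) * w - hestD κ ρ ξ w) /
    ((κ : ℂ) - (ρ : ℂ) * (ξ : ℂ) * w + hestD κ ρ ξ w)

def hestB (κ ρ ξ : ℝ) (w : ℂ) (τ : ℝ) : ℂ :=
  (((κ : ℂ) - (ρ : ℂ) * (ξ : ℂ) * w - hestD κ ρ ξ w) / (ξ : ℂ) ^ 2) *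
    ((1 - Complex.exp (-(hestD κ ρ ξ w) * (τ : ℂ))) /
      (1 - hestGamma κ ρ ξ w * Complex.exp (-(hestD κ ρ ξ w) * (τ : ℂ))))

def hestA (κ θ ρ ξ : ℝ) (w : ℂ) (τ : ℝ) : ℂ :=
  ((κ * θ / ξ ^ 2 : ℝ) : ℂ) *
    (((κ : ℂ) - (ρ : ℂ) * (ξ : ℂ) * w - hestD κ ρ ξ w) * (τ : ℂ) -
      2 * Complex.log ((1 - hestGamma κ ρ ξ w * Complex.exp (-(hestD κ ρ ξ w) * (τ : ℂ))) /
        (1 - hestGamma κ ρ ξ w)))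

def betaT (κ ξ t : ℝ) : ℝ := ξ ^ 2 * (1 - Real.exp (-(κ * t))) / (4 * κ)

/-- explicit Heston forward log-mgf `G_τ(w)`. -/
def hestG (κ θ ξ v ρ t : ℝ) (w : ℂ) (τ : ℝ) : ℂ :=
  hestA κ θ ρ ξ w τ +
    hestB κ ρ ξ w τ * (v : ℂ) * ((Real.exp (-(κ * t)) : ℝ) : ℂ) /
      (1 - 2 * (betaT κ ξ t : ℂ) * hestB κ ρ ξ w τ) -
    ((2 * κ * θ / ξ ^ 2 : ℝ) : ℂ) *
      Complex.log (1 - 2 * (betaT κ ξ t : ℂ) * hestB κ ρ ξ w τ)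

/-- rescaled forward log-mgf, for complex argument. -/
def hestLambdaC (κ θ ξ v ρ t τ : ℝ) (z : ℂ) : ℂ :=
  ((Real.sqrt τ : ℝ) : ℂ) * hestG κ θ ξ v ρ t (z / ((Real.sqrt τ : ℝ) : ℂ)) τ

/-- rescaled forward log-mgf `Λ_τ(u) = √τ · G_τ(u/√τ)`. -/
def hestLambda (κ θ ξ v ρ t τ : ℝ) (u : ℝ) : ℂ :=
  hestLambdaC κ θ ξ v ρ t τ (u : ℂ)

/-- `D_{t,τ}`: the maximal open interval containing `0` on which `Λ_τ` is real-valued. -/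
def hestDom (κ θ ξ v ρ t τ : ℝ) : Set ℝ :=
  connectedComponentIn (interior {u : ℝ | (hestLambda κ θ ξ v ρ t τ u).im = 0}) 0


def B1hat (ρ ξ u : ℝ) : ℝ := u / 4 * (u ^ 2 * ρ * ξ - 2)

/-!
Put `s = √τ`, `w = u / s`, `c = κ - ρξw`, `d = d(w)` and `E = e^{-dτ}`. Clearing `γ` and using
`c² - d² = w (w - 1) ξ²` gives `B = w (w - 1) (1 - E) / (c (1 - E) + d (1 + E))`; in terms of
`δ = dτ = s² d` and `Φ(δ) = (1 - e^{-δ}) / δ` this reads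
`B = u (u - s) Φ(δ) / (s (κ s - ρ ξ u) Φ(δ) + 1 + e^{-δ})`.
Since `(s d)² = (κ s - ρ ξ u)² + u (s - u) ξ²` is bounded, `δ = O(s)` whatever branch `d` is on,
and `Φ(δ) = 1 - δ/2 + O(δ²)`, `e^{-δ} = 1 - δ + O(δ²)`: the terms linear in `δ` cancel, leaving
`u²/2 + B̂₁(u) s + O(s²)`. For `u ≠ 0`, `(s d)²` tends to `(ρ² - 1) ξ² u² ≠ 0`, so `δ ≠ 0`
and `Φ(δ)` is a genuine quotient.
-/
section Riccati

variable {κ ρ ξ : ℝ}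

lemma hestD_sq (w : ℂ) :
    hestD κ ρ ξ w ^ 2 = ((κ : ℂ) - ρ * ξ * w) ^ 2 + w * (1 - w) * (ξ : ℂ) ^ 2 := by
  rw [hestD, one_div, Complex.cpow_ofNat_inv_pow]

lemma hestD_zero (hκ : 0 ≤ κ) : hestD κ ρ ξ 0 = κ := by
  rw [hestD, show ((κ : ℂ) - ρ * ξ * 0) ^ 2 + 0 * (1 - 0) * (ξ : ℂ) ^ 2 = ((κ ^ 2 : ℝ) : ℂ) by
    push_cast; ring, one_div, ← Complex.ofReal_ofNat, ← Complex.ofReal_inv,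
    ← Complex.ofReal_cpow (by positivity)]
  exact congrArg _ (Real.pow_rpow_inv_natCast hκ two_ne_zero)

lemma hestB_zero (hκ : 0 ≤ κ) (τ : ℝ) : hestB κ ρ ξ 0 τ = 0 := by
  simp [hestB, hestD_zero hκ]

lemma hestD_add_ne_zero (hξ : ξ ≠ 0) {w : ℂ} (hw₀ : w ≠ 0) (hw₁ : w ≠ 1) :
    (κ : ℂ) - ρ * ξ * w + hestD κ ρ ξ w ≠ 0 := by
  intro h
  have hsq := hestD_sq (κ := κ) (ρ := ρ) (ξ := ξ) w
  rw [eq_neg_of_add_eq_zero_right h, neg_sq, left_eq_add] at hsq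
  have hw₁' : 1 - w ≠ 0 := sub_ne_zero.mpr hw₁.symm
  exact mul_ne_zero (mul_ne_zero hw₀ hw₁') (by exact_mod_cast pow_ne_zero 2 hξ) hsq

lemma hestB_eq_div (hξ : ξ ≠ 0) {w : ℂ} (hcd : (κ : ℂ) - ρ * ξ * w + hestD κ ρ ξ w ≠ 0)
    (τ : ℝ) :
    hestB κ ρ ξ w τ =
      w * (w - 1) * (1 - Complex.exp (-hestD κ ρ ξ w * τ)) /
        (((κ : ℂ) - ρ * ξ * w) * (1 - Complex.exp (-hestD κ ρ ξ w * τ)) +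
          hestD κ ρ ξ w * (1 + Complex.exp (-hestD κ ρ ξ w * τ))) := by
  have hξ' : (ξ : ℂ) ^ 2 ≠ 0 := by exact_mod_cast pow_ne_zero 2 hξ
  have hsq := hestD_sq (κ := κ) (ρ := ρ) (ξ := ξ) w
  set c : ℂ := (κ : ℂ) - ρ * ξ * w
  set d := hestD κ ρ ξ w
  set E := Complex.exp (-d * τ)
  have hgam : 1 - hestGamma κ ρ ξ w * E = (c * (1 - E) + d * (1 + E)) / (c + d) := by
    show 1 - (c - d) / (c + d) * E = _
    field_simp
    ring
  rw [hestB, hgam]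
  change (c - d) / (ξ : ℂ) ^ 2 * ((1 - E) / ((c * (1 - E) + d * (1 + E)) / (c + d))) = _
  rw [div_div_eq_mul_div, mul_div_assoc']
  congr 1
  rw [div_mul_eq_mul_div, div_eq_iff hξ']
  linear_combination (E - 1) * hsq

end Riccati

def phiExp (z : ℂ) : ℂ := (1 - Complex.exp (-z)) / z

def hestBScaled (κ ρ ξ u s : ℝ) (δ : ℂ) : ℂ :=
  u * (u - s) * phiExp δ / (s * (κ * s - ρ * ξ * u) * phiExp δ + 1 + Complex.exp (-δ))

lemma hestB_div_eq_hestBScaled {κ ρ ξ : ℝ} (hξ : ξ ≠ 0) {u s : ℝ} (hs : s ≠ 0)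
    (hcd : (κ : ℂ) - ρ * ξ * (u / s) + hestD κ ρ ξ (u / s) ≠ 0)
    (hd : hestD κ ρ ξ (u / s) ≠ 0) :
    hestB κ ρ ξ (u / s) (s ^ 2) = hestBScaled κ ρ ξ u s (s ^ 2 * hestD κ ρ ξ (u / s)) := by
  have hs' : (s : ℂ) ≠ 0 := by exact_mod_cast hs
  set d := hestD κ ρ ξ (u / s)
  set E := Complex.exp (-(s ^ 2 * d))
  have hE : Complex.exp (-d * ((s ^ 2 : ℝ) : ℂ)) = E := by
    rw [Complex.ofReal_pow, neg_mul, mul_comm]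
  rw [hestB_eq_div hξ hcd, hE, hestBScaled, phiExp]
  have hnum : (u : ℂ) * (u - s) * ((1 - E) / (s ^ 2 * d)) = u / s * (u / s - 1) * (1 - E) / d := by
    field_simp
  have hden : (s : ℂ) * (κ * s - ρ * ξ * u) * ((1 - E) / (s ^ 2 * d)) + 1 + E =
      ((κ - ρ * ξ * (u / s)) * (1 - E) + d * (1 + E)) / d := by
    field_simp
    ring
  rw [hnum, hden, div_div_div_cancel_right₀ hd]

lemma Complex.exp_sub_sum_range_isBigO (n : ℕ) :
    (fun z : ℂ => Complex.exp z - ∑ m ∈ Finset.range n, z ^ m / m.factorial) =O[𝓝 0]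
      fun z => z ^ n := by
  refine Asymptotics.isBigO_iff.mpr ⟨Real.exp 1, ?_⟩
  filter_upwards [Metric.closedBall_mem_nhds (0 : ℂ) one_pos] with z hz
  rw [mem_closedBall_zero_iff] at hz
  calc _ ≤ ‖z‖ ^ n * Real.exp ‖z‖ := Complex.norm_exp_sub_sum_le_norm_mul_exp z n
    _ ≤ Real.exp 1 * ‖z ^ n‖ := by
      rw [norm_pow, mul_comm]; gcongr

lemma Complex.exp_neg_sub_sum_range_isBigO (n : ℕ) :
    (fun z : ℂ => Complex.exp (-z) - ∑ m ∈ Finset.range n, (-z) ^ m / m.factorial) =O[𝓝 0]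
      fun z => z ^ n := by
  have h := (Complex.exp_sub_sum_range_isBigO n).comp_tendsto
    (show Tendsto (fun z : ℂ => -z) (𝓝 0) (𝓝 0) by simpa using continuous_neg.tendsto (0 : ℂ))
  exact h.trans (Asymptotics.isBigO_of_le _ fun z => by simp [norm_pow])

lemma exp_neg_sub_one_sub_isBigO :
    (fun z : ℂ => Complex.exp (-z) - (1 - z)) =O[𝓝 0] fun z => z ^ 2 := by
  simpa [Finset.sum_range_succ, sub_eq_add_neg, add_comm] using
    Complex.exp_neg_sub_sum_range_isBigO 2

lemma phiExp_sub_isBigO :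
    (fun z : ℂ => phiExp z - (1 - z / 2)) =O[𝓝[≠] 0] fun z => z ^ 2 := by
  have h := ((Complex.exp_neg_sub_sum_range_isBigO 3).mono nhdsWithin_le_nhds).mul
    (Asymptotics.isBigO_refl (fun z : ℂ => z⁻¹) (𝓝[≠] 0))
  refine h.neg_left.congr' ?_ ?_
  · filter_upwards [self_mem_nhdsWithin] with z (hz : z ≠ 0)
    simp only [Finset.sum_range_succ, Finset.sum_range_zero, phiExp]
    field_simp
    ring
  · filter_upwards [self_mem_nhdsWithin] with z (hz : z ≠ 0)
    field_simp

lemma tendsto_phiExp : Tendsto phiExp (𝓝[≠] 0) (𝓝 1) := by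
  have hz : Tendsto (fun z : ℂ => 1 - z / 2) (𝓝[≠] 0) (𝓝 1) :=
    ((by fun_prop : Continuous fun z : ℂ => 1 - z / 2).tendsto' 0 1 (by norm_num)).mono_left
      nhdsWithin_le_nhds
  have hz2 : Tendsto (fun z : ℂ => z ^ 2) (𝓝[≠] 0) (𝓝 0) := by
    simpa using ((continuous_pow 2).tendsto (0 : ℂ)).mono_left nhdsWithin_le_nhds
  simpa using hz.add (phiExp_sub_isBigO.trans_tendsto hz2)

/-- `B̂₁` is the coefficient that makes the order-`s` term vanish. -/
lemma mul_sub_B1hat_mul (κ ρ ξ u s : ℝ) :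
    u * (u - s) - (u ^ 2 / 2 + B1hat ρ ξ u * s) * (s * (κ * s - ρ * ξ * u) + 2) =
      s ^ 2 * (B1hat ρ ξ u * (ρ * ξ * u - κ * s) - u ^ 2 / 2 * κ) := by
  rw [B1hat]
  ring

lemma isBigO_one_of_continuous {l : Filter ℝ} (hl : l ≤ 𝓝 0) {f : ℝ → ℂ} (hf : Continuous f) :
    f =O[l] fun _ => (1 : ℝ) :=
  ((hf.tendsto 0).mono_left hl).isBigO_one ℝ

lemma hestBScaled_sub_isBigO (κ ρ ξ u : ℝ) {l : Filter ℝ} (hl : l ≤ 𝓝 0) {δ : ℝ → ℂ}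
    (hδ : δ =O[l] fun s => s) (hδ₀ : ∀ᶠ s in l, δ s ≠ 0) :
    (fun s => hestBScaled κ ρ ξ u s (δ s) -
        (((u ^ 2 / 2 : ℝ) : ℂ) + ((B1hat ρ ξ u : ℝ) : ℂ) * s)) =O[l] fun s => s ^ 2 := by
  set T : ℝ → ℂ := fun s => ((u ^ 2 / 2 : ℝ) : ℂ) + ((B1hat ρ ξ u : ℝ) : ℂ) * s
  set k : ℝ → ℂ := fun s => s * (κ * s - ρ * ξ * u)
  set q : ℝ → ℂ := fun s => ((B1hat ρ ξ u * (ρ * ξ * u - κ * s) - u ^ 2 / 2 * κ : ℝ) : ℂ)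
  set e₁ : ℝ → ℂ := fun s => phiExp (δ s) - (1 - δ s / 2)
  set e₃ : ℝ → ℂ := fun s => Complex.exp (-δ s) - (1 - δ s)
  have hδt : Tendsto δ l (𝓝 0) := hδ.trans_tendsto (tendsto_id.mono_left hl)
  have hδt' : Tendsto δ l (𝓝[≠] 0) :=
    tendsto_nhdsWithin_of_tendsto_nhds_of_eventually_within _ hδt hδ₀
  have he₁ : e₁ =O[l] fun s => s ^ 2 := (phiExp_sub_isBigO.comp_tendsto hδt').trans (hδ.pow 2)
  have he₃ : e₃ =O[l] fun s => s ^ 2 :=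
    (exp_neg_sub_one_sub_isBigO.comp_tendsto hδt).trans (hδ.pow 2)
  have hden : Tendsto (fun s => k s * phiExp (δ s) + 1 + Complex.exp (-δ s)) l (𝓝 2) := by
    have hk : Tendsto k l (𝓝 0) := by
      simpa [k] using ((by fun_prop : Continuous k).tendsto 0).mono_left hl
    have hE : Tendsto (fun s => Complex.exp (-δ s)) l (𝓝 1) := by
      simpa [Function.comp_def] using (Complex.continuous_exp.tendsto _).comp hδt.neg
    have := (hk.mul (tendsto_phiExp.comp hδt')).add_const 1 |>.add hE
    rwa [zero_mul, zero_add, one_add_one_eq_two] at this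
  have hpoly (s : ℝ) : (u : ℂ) * (u - s) - T s * (k s + 2) = s ^ 2 * q s := by
    have := congrArg ((↑) : ℝ → ℂ) (mul_sub_B1hat_mul κ ρ ξ u s)
    push_cast at this
    simpa [T, k, q] using this
  have hkey : (fun s => hestBScaled κ ρ ξ u s (δ s) - T s) =ᶠ[l] fun s =>
      ((1 - δ s / 2) * (s ^ 2 * q s) + ((u : ℂ) * (u - s) - T s * k s) * e₁ s - T s * e₃ s) *
        (k s * phiExp (δ s) + 1 + Complex.exp (-δ s))⁻¹ := by
    filter_upwards [hden.eventually_ne two_ne_zero] with s hs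
    rw [← hpoly, hestBScaled, div_sub' hs, div_eq_mul_inv]
    simp only [e₁, e₃, k]
    ring
  have hhalf : (fun s => 1 - δ s / 2) =O[l] fun _ => (1 : ℝ) := by
    simpa using ((hδt.div_const 2).const_sub 1).isBigO_one ℝ
  have hs2 : (fun s : ℝ => (s : ℂ) ^ 2) =O[l] fun s => s ^ 2 :=
    Asymptotics.isBigO_of_le _ fun s => by simp
  have hnum₁ := hhalf.mul (hs2.mul (isBigO_one_of_continuous hl (by fun_prop : Continuous q)))
  have hnum₂ := (isBigO_one_of_continuous hl (by fun_prop :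
    Continuous fun s : ℝ => (u : ℂ) * (u - s) - T s * k s)).mul he₁
  have hnum₃ := (isBigO_one_of_continuous hl (by fun_prop : Continuous T)).mul he₃
  simp only [one_mul, mul_one] at hnum₁ hnum₂ hnum₃
  refine hkey.trans_isBigO ?_
  simpa using ((hnum₁.add hnum₂).sub hnum₃).mul ((hden.inv₀ two_ne_zero).isBigO_one ℝ)

lemma mul_hestD_div_sq {κ ρ ξ u s : ℝ} (hs : s ≠ 0) :
    ((s : ℂ) * hestD κ ρ ξ (u / s)) ^ 2 =
      (((κ * s - ρ * ξ * u) ^ 2 + u * (s - u) * ξ ^ 2 : ℝ) : ℂ) := by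
  have hs' : (s : ℂ) ≠ 0 := by exact_mod_cast hs
  rw [mul_pow, hestD_sq]
  push_cast
  field_simp

lemma sq_mul_hestD_div_isBigO (κ ρ ξ u : ℝ) :
    (fun s : ℝ => (s : ℂ) ^ 2 * hestD κ ρ ξ (u / s)) =O[𝓝[≠] 0] fun s => s := by
  have hsd : (fun s : ℝ => (s : ℂ) * hestD κ ρ ξ (u / s)) =O[𝓝[≠] 0] fun _ => (1 : ℝ) := by
    refine Asymptotics.IsBigO.of_pow two_ne_zero ?_
    refine (isBigO_one_of_continuous nhdsWithin_le_nhds (by fun_prop : Continuous fun s : ℝ =>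
      (((κ * s - ρ * ξ * u) ^ 2 + u * (s - u) * ξ ^ 2 : ℝ) : ℂ))).congr' ?_
      (Eventually.of_forall fun _ => by simp)
    filter_upwards [self_mem_nhdsWithin] with s (hs : s ≠ 0)
    exact (mul_hestD_div_sq hs).symm
  simpa [sq, mul_assoc] using
    (Asymptotics.isBigO_of_le _ fun s : ℝ => (by simp : ‖(s : ℂ)‖ ≤ ‖s‖)).mul hsd

lemma eventually_hestD_div_ne_zero {κ ρ ξ u : ℝ} (hξ : ξ ≠ 0) (hρ : ρ ^ 2 ≠ 1) (hu : u ≠ 0) :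
    ∀ᶠ s : ℝ in 𝓝[≠] 0, hestD κ ρ ξ (u / s) ≠ 0 := by
  set Q : ℝ → ℝ := fun s => (κ * s - ρ * ξ * u) ^ 2 + u * (s - u) * ξ ^ 2
  have hQ₀ : Q 0 ≠ 0 := by
    have : Q 0 = (ρ ^ 2 - 1) * ξ ^ 2 * u ^ 2 := by simp only [Q]; ring
    rw [this]
    exact mul_ne_zero (mul_ne_zero (sub_ne_zero.mpr hρ) (pow_ne_zero 2 hξ)) (pow_ne_zero 2 hu)
  filter_upwards [self_mem_nhdsWithin,
    (((by fun_prop : Continuous Q).tendsto 0).eventually_ne hQ₀).filter_mono nhdsWithin_le_nhds]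
    with s (hs : s ≠ 0) hQ hd
  apply hQ
  change (κ * s - ρ * ξ * u) ^ 2 + u * (s - u) * ξ ^ 2 = 0
  have h := mul_hestD_div_sq (κ := κ) (ρ := ρ) (ξ := ξ) (u := u) hs
  rw [hd, mul_zero, zero_pow two_ne_zero] at h
  exact_mod_cast h.symm

lemma hestB_div_sq_sub_isBigO {κ ρ ξ : ℝ} (hκ : 0 ≤ κ) (hξ : ξ ≠ 0) (hρ : ρ ^ 2 ≠ 1) (u : ℝ) :
    (fun s : ℝ => hestB κ ρ ξ (u / s) (s ^ 2) -
        (((u ^ 2 / 2 : ℝ) : ℂ) + ((B1hat ρ ξ u : ℝ) : ℂ) * s)) =O[𝓝[≠] 0] fun s => s ^ 2 := by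
  rcases eq_or_ne u 0 with rfl | hu
  · refine (Asymptotics.isBigO_zero _ _).congr_left fun s => ?_
    simp [hestB_zero hκ, B1hat]
  have hne : ∀ᶠ s : ℝ in 𝓝[≠] 0, s ≠ 0 ∧ s ≠ u ∧ hestD κ ρ ξ (u / s) ≠ 0 := by
    filter_upwards [self_mem_nhdsWithin,
      (eventually_ne_nhds hu.symm).filter_mono nhdsWithin_le_nhds, eventually_hestD_div_ne_zero hξ hρ hu] with s hs hsu hd using ⟨hs, hsu, hd⟩
  refine (hestBScaled_sub_isBigO κ ρ ξ u nhdsWithin_le_nhds (sq_mul_hestD_div_isBigO κ ρ ξ u)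
    (hne.mono fun s h => mul_ne_zero (by exact_mod_cast pow_ne_zero 2 h.1) h.2.2)).congr' ?_
    EventuallyEq.rfl
  filter_upwards [hne] with s ⟨hs, hsu, hd⟩
  have hw₀ : (u : ℂ) / s ≠ 0 := div_ne_zero (by exact_mod_cast hu) (by exact_mod_cast hs)
  have hw₁ : (u : ℂ) / s ≠ 1 := by
    rw [Ne, div_eq_one_iff_eq (by exact_mod_cast hs)]
    exact_mod_cast hsu.symm
  rw [← hestB_div_eq_hestBScaled hξ hs (hestD_add_ne_zero hξ hw₀ hw₁) hd]

theorem stmt9_general (κ ξ ρ : ℝ) (hκ : 0 < κ) (hξ : 0 < ξ)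
    (hρ : ρ ∈ Set.Ioo (-1 : ℝ) 1)
    (u : ℝ) :
    (fun τ : ℝ => hestB κ ρ ξ ((u : ℂ) / ((Real.sqrt τ : ℝ) : ℂ)) τ -
        (((u ^ 2 / 2 : ℝ) : ℂ) + ((B1hat ρ ξ u : ℝ) : ℂ) * ((Real.sqrt τ : ℝ) : ℂ)))
      =O[𝓝[>] (0 : ℝ)] fun τ : ℝ => τ := by
  have hρ' : ρ ^ 2 ≠ 1 := (by nlinarith [hρ.1, hρ.2] : ρ ^ 2 < 1).ne
  have hsqrt : Tendsto Real.sqrt (𝓝[>] 0) (𝓝[≠] 0) :=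
    tendsto_nhdsWithin_of_tendsto_nhds_of_eventually_within _
      (by simpa using (Real.continuous_sqrt.tendsto 0).mono_left nhdsWithin_le_nhds)
      (eventually_nhdsWithin_of_forall fun τ hτ => (Real.sqrt_pos.mpr hτ).ne')
  have hτ : ∀ᶠ τ in 𝓝[>] (0 : ℝ), Real.sqrt τ ^ 2 = τ :=
    eventually_nhdsWithin_of_forall fun τ hτ => Real.sq_sqrt (le_of_lt hτ)
  refine ((hestB_div_sq_sub_isBigO hκ.le hξ.ne' hρ' u).comp_tendsto hsqrt).congr' ?_ hτ
  filter_upwards [hτ] with τ h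
  simp only [Function.comp_apply, h]

theorem stmt9 (κ θ ξ v ρ t : ℝ) (hκ : 0 < κ) (hθ : 0 < θ) (hξ : 0 < ξ)
    (hv : 0 < v) (hρ : ρ ∈ Set.Ioo (-1 : ℝ) 1) (ht : 0 < t)
    (u : ℝ) (hu : |u| < 1 / Real.sqrt (betaT κ ξ t)) :
    (fun τ : ℝ => hestB κ ρ ξ ((u : ℂ) / ((Real.sqrt τ : ℝ) : ℂ)) τ -
        (((u ^ 2 / 2 : ℝ) : ℂ) + ((B1hat ρ ξ u : ℝ) : ℂ) * ((Real.sqrt τ : ℝ) : ℂ)))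
      =O[𝓝[>] (0 : ℝ)] fun τ : ℝ => τ :=
  stmt9_general κ ξ ρ hκ hξ hρ u

end
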